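/- Let 0 ≤ β < 1 and suppose there exists s₀ > 0 such that lim_{N→∞} R₂(β;s,N) = 2s for all 0 < s < s₀. Then lim_{N→∞} R₂(β;s,N) = 2s for all s > 0, i.e. the sequence has Poissonian β-pair correlations. -/

import Mathlib

/-!
Put `S(ℓ) = ∑_{m, n ≤ N} (ℓ - ‖x_m - x_n‖)⁺` (diagonal included) and
`E_N(v) = N^{2β-2} S(v / N^β)`. The slope of `S` at `ℓ` is the number of pairs at distance
`≤ ℓ`, so the difference quotients of `E_N` are squeezed between values of
`R₂(β; ·, N) + N^{β-1}`. For `ℓ ≤ 1/2`, `S(ℓ)` is the integral over one period of the square of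
the number of points in an arc of length `ℓ`. Hence Cauchy–Schwarz gives `E_N(v) ≥ v²`, and cutting
an arc into `K` equal arcs gives `E_N(v) ≤ K² E_N(v / K)`. For `σ < s₀` the hypothesis turns upper
Riemann sums of the difference quotients into `limsup E_N(σ) ≤ σ²`, and the scaling inequality
extends this to every `σ`. Squeezing the difference quotients of `E_N` at `s` between these bounds
gives `R₂(β; s, N) → 2s`. The scale `s = 1/2` for `β = 0` is degenerate: there every pair counts,
and `R₂ = 1 - 1/N`.
-/

open Finset Filter MeasureTheory
open scoped Classical

/-- Distance to the nearest integer. -/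
noncomputable def nd (x : ℝ) : ℝ := |x - round x|

/-- Signed distance to the nearest integer: `{x}` if `{x} ≤ 1/2`, else `{x} - 1`. -/
noncomputable def sd (x : ℝ) : ℝ :=
  if Int.fract x ≤ 1/2 then Int.fract x else Int.fract x - 1

/-- Number of pairs `m ≠ n ≤ N` with `‖x_m - x_n‖ ≤ r`. -/
noncomputable def pairCount (x : ℕ → ℝ) (N : ℕ) (r : ℝ) : ℕ :=
  ((Finset.Icc 1 N ×ˢ Finset.Icc 1 N).filter
    (fun p => p.1 ≠ p.2 ∧ nd (x p.1 - x p.2) ≤ r)).card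

/-- The pair correlation function with parameter `β`. -/
noncomputable def R2 (x : ℕ → ℝ) (β s : ℝ) (N : ℕ) : ℝ :=
  (pairCount x N (s / (N : ℝ) ^ β) : ℝ) / (N : ℝ) ^ (2 - β)

/-- `F_β(t,s,N) = N^{β-1} · #{n ≤ N : ‖x_n - t‖ ≤ s/(2N^β)}`. -/
noncomputable def Fb (x : ℕ → ℝ) (β t s : ℝ) (N : ℕ) : ℝ :=
  (((Finset.Icc 1 N).filter (fun n => nd (x n - t) ≤ s / (2 * (N : ℝ) ^ β))).card : ℝ)
    / (N : ℝ) ^ (1 - β)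

/-- Uniform distribution modulo 1 of a sequence in `[0,1]`. -/
def UnifDist (x : ℕ → ℝ) : Prop :=
  ∀ a b : ℝ, 0 ≤ a → a < b → b ≤ 1 →
    Tendsto (fun N : ℕ =>
      (((Finset.Icc 1 N).filter (fun i => x i ∈ Set.Icc a b)).card : ℝ) / N)
      atTop (nhds (b - a))

/-- Weak Poissonian pair correlations with parameter `γ` (for `γ = 0`, only scales
`s ≤ 1/2` are required). -/
def PPC (x : ℕ → ℝ) (γ : ℝ) : Prop :=
  ∀ s : ℝ, 0 < s → (γ = 0 → s ≤ 1/2) →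
    Tendsto (fun N => R2 x γ s N) atTop (nhds (2 * s))

open scoped ENNReal Topology

lemma Function.Periodic.setLIntegral_Ioc_eq {f : ℝ → ℝ≥0∞} (hf : Function.Periodic f 1)
    (c d : ℝ) : ∫⁻ t in Set.Ioc c (c + 1), f t = ∫⁻ t in Set.Ioc d (d + 1), f t := by
  have h := fun c => UnitAddCircle.lintegral_preimage c hf.lift
  simp only [hf.lift_coe] at h
  rw [h c, h d]

lemma Int.fract_lt_iff_of_sub_one_le {z ℓ : ℝ} (h₁ : ℓ - 1 ≤ z) (h₂ : z < 1) :
    Int.fract z < ℓ ↔ 0 ≤ z ∧ z < ℓ := by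
  rcases le_or_gt 0 z with hz | hz
  · rw [Int.fract_eq_self.2 ⟨hz, h₂⟩]
    exact ⟨fun h => ⟨hz, h⟩, And.right⟩
  · have hfloor : ⌊z⌋ ≤ -1 := by
      have : ⌊z⌋ < 0 := Int.floor_lt.2 (by simpa using hz)
      omega
    have : z + 1 ≤ Int.fract z := by
      rw [Int.fract]
      have : (⌊z⌋ : ℝ) ≤ -1 := by exact_mod_cast hfloor
      linarith
    constructor
    · intro h; linarith
    · rintro ⟨h, -⟩; linarith

lemma Int.fract_sub_nat_mul_lt_iff {ℓ : ℝ} (hℓ : 0 ≤ ℓ) {k : ℕ} (hk : (k + 1) * ℓ ≤ 1)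
    (y : ℝ) : Int.fract (y - k * ℓ) < ℓ ↔ k * ℓ ≤ Int.fract y ∧ Int.fract y < (k + 1) * ℓ := by
  have hfract : Int.fract (y - k * ℓ) = Int.fract (Int.fract y - k * ℓ) := by
    rw [Int.fract_eq_fract]
    exact ⟨⌊y⌋, by rw [Int.fract]; ring⟩
  have hkℓ : 0 ≤ (k : ℝ) * ℓ := by positivity
  rw [hfract, Int.fract_lt_iff_of_sub_one_le (by linarith [Int.fract_nonneg y])
    (by linarith [Int.fract_lt_one y])]
  constructor <;> rintro ⟨h₁, h₂⟩ <;> constructor <;> linarith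

lemma sub_mul_ite_le_max_sub_max {d ℓ ℓ' : ℝ} (h : ℓ ≤ ℓ') :
    (ℓ' - ℓ) * (if d ≤ ℓ then 1 else 0) ≤ max (ℓ' - d) 0 - max (ℓ - d) 0 := by
  split_ifs <;> simp only [max_def] <;> split_ifs <;> linarith

lemma max_sub_max_le_sub_mul_ite {d ℓ ℓ' : ℝ} (h : ℓ ≤ ℓ') :
    max (ℓ' - d) 0 - max (ℓ - d) 0 ≤ (ℓ' - ℓ) * (if d ≤ ℓ' then 1 else 0) := by
  split_ifs <;> simp only [max_def] <;> split_ifs <;> linarith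

lemma Real.rpow_two_mul_sub_two (β : ℝ) {y : ℝ} (hy : 0 < y) :
    y ^ (2 * β - 2) = (y ^ β) ^ 2 / y ^ 2 := by
  rw [Real.rpow_sub hy, mul_comm, Real.rpow_mul hy.le, Real.rpow_two, Real.rpow_two]

lemma Real.rpow_two_mul_sub_two_mul_div_rpow_mul (β : ℝ) {y : ℝ} (hy : 0 < y) (w P : ℝ) :
    y ^ (2 * β - 2) * (w / y ^ β * (P + y)) = w * (P / y ^ (2 - β) + y ^ (β - 1)) := by
  rw [Real.rpow_two_mul_sub_two β hy, Real.rpow_sub hy, Real.rpow_sub hy, Real.rpow_two,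
    Real.rpow_one]
  have := Real.rpow_pos_of_pos hy β
  field_simp

lemma tendsto_rpow_sub_one_atTop_nhds_zero {β : ℝ} (hβ : β < 1) :
    Tendsto (fun N : ℕ => (N : ℝ) ^ (β - 1)) atTop (𝓝 0) := by
  have := (tendsto_rpow_neg_atTop (by linarith : 0 < 1 - β)).comp tendsto_natCast_atTop_atTop
  simpa [Function.comp_def] using this

lemma eventually_div_rpow_le_half {β σ : ℝ} (hβ : 0 ≤ β) (hσ : β = 0 → σ ≤ 1 / 2) :
    ∀ᶠ N : ℕ in atTop, σ / (N : ℝ) ^ β ≤ 1 / 2 := by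
  rcases hβ.eq_or_lt with rfl | hβ
  · exact Eventually.of_forall fun N => by simpa using hσ rfl
  · have : Tendsto (fun N : ℕ => σ / (N : ℝ) ^ β) atTop (𝓝 0) :=
      tendsto_const_nhds.div_atTop ((tendsto_rpow_atTop hβ).comp tendsto_natCast_atTop_atTop)
    exact this.eventually_le_const (by norm_num)

/-- The set of `t` such that `a` lies in the arc `[t, t + ℓ)` of `ℝ / ℤ`. -/
def arc (a ℓ : ℝ) : Set ℝ := {t | Int.fract (a - t) < ℓ}

lemma measurableSet_arc (a ℓ : ℝ) : MeasurableSet (arc a ℓ) :=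
  measurableSet_lt (measurable_fract.comp (measurable_const.sub measurable_id)) measurable_const

lemma arc_add_intCast (a ℓ : ℝ) (k : ℤ) : arc (a + k) ℓ = arc a ℓ := by
  ext t
  simp only [arc, Set.mem_ofPred_eq, add_sub_right_comm, Int.fract_add_intCast]

lemma add_one_mem_arc_iff {a ℓ t : ℝ} : t + 1 ∈ arc a ℓ ↔ t ∈ arc a ℓ := by
  simp only [arc, Set.mem_ofPred_eq, sub_add_eq_sub_sub, Int.fract_sub_one]

lemma arc_inter_Ioc {a ℓ c : ℝ} (h₁ : c + ℓ ≤ a) (h₂ : a ≤ c + 1) :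
    arc a ℓ ∩ Set.Ioc c (c + 1) = Set.Ioc (a - ℓ) a := by
  ext t
  simp only [arc, Set.mem_inter_iff, Set.mem_ofPred_eq, Set.mem_Ioc]
  constructor
  · rintro ⟨h, ht₁, ht₂⟩
    have := (Int.fract_lt_iff_of_sub_one_le (by linarith) (by linarith)).1 h
    constructor <;> linarith
  · rintro ⟨ht₁, ht₂⟩
    exact ⟨(Int.fract_lt_iff_of_sub_one_le (by linarith) (by linarith)).2
      ⟨by linarith, by linarith⟩, by linarith, by linarith⟩

lemma setLIntegral_indicator_arc_inter_arc {a b ℓ : ℝ} (hℓ : ℓ ≤ 1 / 2) :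
    ∫⁻ t in Set.Ioc 0 1, (arc a ℓ ∩ arc b ℓ).indicator 1 t = ENNReal.ofReal (ℓ - nd (a - b)) := by
  -- Move `b` by an integer so that `|a - b'| = ‖a - b‖`; on the period `(max a b' - 1, max a b']`
  -- both arcs are then plain intervals.
  set b' := b + (round (a - b) : ℤ)
  have hd : |a - b'| = nd (a - b) := by simp only [nd, b']; ring_nf
  have hd' : |a - b'| ≤ 1 / 2 := hd ▸ abs_sub_round (a - b)
  have hmax : max a b' - 1 + ℓ ≤ min a b' := by
    have := max_sub_min_eq_abs' a b'
    linarith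
  have hper : Function.Periodic ((arc a ℓ ∩ arc b' ℓ).indicator (1 : ℝ → ℝ≥0∞)) 1 := by
    intro t
    simp only [Set.indicator, Set.mem_inter_iff, add_one_mem_arc_iff, Pi.one_apply]
  rw [← arc_add_intCast b ℓ (round (a - b)), ← zero_add (1 : ℝ),
    hper.setLIntegral_Ioc_eq 0 (max a b' - 1),
    lintegral_indicator_one ((measurableSet_arc _ _).inter (measurableSet_arc _ _)),
    Measure.restrict_apply' measurableSet_Ioc, Set.inter_inter_distrib_right,
    arc_inter_Ioc (by linarith [min_le_left a b']) (by linarith [le_max_left a b']),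
    arc_inter_Ioc (by linarith [min_le_right a b']) (by linarith [le_max_right a b']),
    Set.Ioc_inter_Ioc, Real.volume_Ioc, max_sub_sub_right, ← hd, ← max_sub_min_eq_abs']
  ring_nf

section Overlap

variable {ι : Type*} (A : Finset ι) (x : ι → ℝ)

noncomputable def arcCount (ℓ t : ℝ) : ℕ := #{n ∈ A | t ∈ arc (x n) ℓ}

noncomputable def overlapSum (ℓ : ℝ) : ℝ :=
  ∑ p ∈ A ×ˢ A, max (ℓ - nd (x p.1 - x p.2)) 0

lemma arcCount_eq_sum_indicator (ℓ t : ℝ) :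
    (arcCount A x ℓ t : ℝ≥0∞) = ∑ n ∈ A, (arc (x n) ℓ).indicator 1 t := by
  simp only [arcCount, natCast_card_filter, Set.indicator, Pi.one_apply]

lemma measurable_arcCount (ℓ : ℝ) : Measurable fun t => (arcCount A x ℓ t : ℝ≥0∞) := by
  simp only [arcCount_eq_sum_indicator]
  exact Finset.measurable_fun_sum _ fun n _ =>
    measurable_const.indicator (measurableSet_arc _ _)

lemma overlapSum_nonneg (ℓ : ℝ) : 0 ≤ overlapSum A x ℓ :=
  Finset.sum_nonneg fun _ _ => le_max_right _ _

lemma overlapSum_sub_const (c ℓ : ℝ) :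
    overlapSum A (fun n => x n - c) ℓ = overlapSum A x ℓ := by
  simp only [overlapSum, sub_sub_sub_cancel_right]

lemma le_overlapSum_sub {ℓ ℓ' : ℝ} (h : ℓ ≤ ℓ') :
    (ℓ' - ℓ) * #{p ∈ A ×ˢ A | nd (x p.1 - x p.2) ≤ ℓ} ≤
      overlapSum A x ℓ' - overlapSum A x ℓ := by
  rw [overlapSum, overlapSum, ← sum_sub_distrib, natCast_card_filter, mul_sum]
  exact sum_le_sum fun p _ => sub_mul_ite_le_max_sub_max h

lemma overlapSum_sub_le {ℓ ℓ' : ℝ} (h : ℓ ≤ ℓ') :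
    overlapSum A x ℓ' - overlapSum A x ℓ ≤
      (ℓ' - ℓ) * #{p ∈ A ×ˢ A | nd (x p.1 - x p.2) ≤ ℓ'} := by
  rw [overlapSum, overlapSum, ← sum_sub_distrib, natCast_card_filter, mul_sum]
  exact sum_le_sum fun p _ => max_sub_max_le_sub_mul_ite h

lemma setLIntegral_arcCount_sq {ℓ : ℝ} (hℓ : ℓ ≤ 1 / 2) :
    ∫⁻ t in Set.Ioc 0 1, (arcCount A x ℓ t : ℝ≥0∞) ^ 2 = ENNReal.ofReal (overlapSum A x ℓ) := by
  have hsq : ∀ t, (arcCount A x ℓ t : ℝ≥0∞) ^ 2 =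
      ∑ p ∈ A ×ˢ A, (arc (x p.1) ℓ ∩ arc (x p.2) ℓ).indicator 1 t := by
    intro t
    simp only [arcCount_eq_sum_indicator, sq, Finset.sum_mul_sum, ← Finset.sum_product',
      Set.inter_indicator_one, Pi.mul_apply]
  simp only [hsq]
  rw [lintegral_finsetSum _ fun p _ => measurable_one.indicator
      ((measurableSet_arc _ _).inter (measurableSet_arc _ _)), overlapSum,
    ENNReal.ofReal_sum_of_nonneg fun _ _ => le_max_right _ _]
  refine Finset.sum_congr rfl fun p _ => ?_
  rw [setLIntegral_indicator_arc_inter_arc hℓ, ENNReal.ofReal_max, ENNReal.ofReal_zero,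
    max_eq_left zero_le]

lemma setLIntegral_arcCount {ℓ : ℝ} (hℓ : ℓ ≤ 1 / 2) :
    ∫⁻ t in Set.Ioc 0 1, (arcCount A x ℓ t : ℝ≥0∞) = ENNReal.ofReal (#A * ℓ) := by
  simp only [arcCount_eq_sum_indicator]
  rw [lintegral_finsetSum _ fun n _ => measurable_one.indicator (measurableSet_arc _ _)]
  have harc : ∀ a, ∫⁻ t in Set.Ioc 0 1, (arc a ℓ).indicator 1 t = ENNReal.ofReal ℓ := fun a => by
    simpa [nd] using setLIntegral_indicator_arc_inter_arc (a := a) (b := a) hℓ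
  simp only [harc, Finset.sum_const, nsmul_eq_mul]
  rw [ENNReal.ofReal_mul (Nat.cast_nonneg _), ENNReal.ofReal_natCast]

lemma sq_le_overlapSum {ℓ : ℝ} (hℓ₀ : 0 ≤ ℓ) (hℓ : ℓ ≤ 1 / 2) :
    (#A * ℓ) ^ 2 ≤ overlapSum A x ℓ := by
  set c := ENNReal.ofReal (#A * ℓ)
  have hamgm : ∀ t, 2 * c * arcCount A x ℓ t ≤ (arcCount A x ℓ t : ℝ≥0∞) ^ 2 + c ^ 2 := by
    intro t
    have := two_mul_le_add_sq (#A * ℓ).toNNReal (arcCount A x ℓ t : NNReal)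
    rw [add_comm, show c = ((#A * ℓ).toNNReal : ℝ≥0∞) from rfl]
    exact_mod_cast ENNReal.coe_le_coe.2 this
  have key : c ^ 2 + c ^ 2 ≤ ENNReal.ofReal (overlapSum A x ℓ) + c ^ 2 :=
    calc c ^ 2 + c ^ 2 = ∫⁻ t in Set.Ioc 0 1, 2 * c * arcCount A x ℓ t := by
          rw [lintegral_const_mul _ (measurable_arcCount A x ℓ), setLIntegral_arcCount A x hℓ]
          ring
      _ ≤ ∫⁻ t in Set.Ioc 0 1, ((arcCount A x ℓ t : ℝ≥0∞) ^ 2 + c ^ 2) := lintegral_mono hamgm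
      _ = ENNReal.ofReal (overlapSum A x ℓ) + c ^ 2 := by
          rw [lintegral_add_right _ measurable_const, setLIntegral_arcCount_sq A x hℓ,
            setLIntegral_const, Real.volume_Ioc]
          simp
  have hc : c ^ 2 ≤ ENNReal.ofReal (overlapSum A x ℓ) :=
    ENNReal.le_of_add_le_add_right (by finiteness) key
  rwa [← ENNReal.ofReal_pow (by positivity),
    ENNReal.ofReal_le_ofReal_iff (overlapSum_nonneg A x ℓ)] at hc

lemma arcCount_succ_mul {ℓ : ℝ} (hℓ : 0 ≤ ℓ) {K : ℕ} (hK : (K + 1) * ℓ ≤ 1) (t : ℝ) :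
    arcCount A x ((K + 1) * ℓ) t =
      arcCount A x (K * ℓ) t + arcCount A (fun n => x n - K * ℓ) ℓ t := by
  simp only [arcCount, card_filter, ← sum_add_distrib]
  refine sum_congr rfl fun n _ => ?_
  have hsplit := Int.fract_sub_nat_mul_lt_iff hℓ hK (x n - t)
  have hmono : (K : ℝ) * ℓ ≤ (K + 1) * ℓ := by nlinarith
  simp only [arc, Set.mem_ofPred_eq, sub_right_comm (x n) _ t, hsplit]
  rcases lt_or_ge (Int.fract (x n - t)) (K * ℓ) with h | h
  · simp [h, h.trans_le hmono, not_le.2 h]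
  · simp only [h, not_lt.2 h, true_and, if_false, zero_add]
    congr

lemma arcCount_nat_mul {ℓ : ℝ} (hℓ : 0 ≤ ℓ) {K : ℕ} (hK : K * ℓ ≤ 1) (t : ℝ) :
    arcCount A x (K * ℓ) t = ∑ k ∈ range K, arcCount A (fun n => x n - k * ℓ) ℓ t := by
  induction K with
  | zero => simp [arcCount, arc, Int.fract_nonneg]
  | succ K ih =>
    push_cast at hK ⊢
    rw [arcCount_succ_mul A x hℓ hK, sum_range_succ, ih (by nlinarith)]

lemma overlapSum_nat_mul_le {ℓ : ℝ} (hℓ₀ : 0 ≤ ℓ) {K : ℕ} (hK₀ : 0 < K) (hK : K * ℓ ≤ 1 / 2) :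
    overlapSum A x (K * ℓ) ≤ K ^ 2 * overlapSum A x ℓ := by
  have hℓ : ℓ ≤ 1 / 2 := le_trans (le_mul_of_one_le_left hℓ₀ (by exact_mod_cast hK₀)) hK
  set q : ℕ → ℝ → ℕ := fun k => arcCount A (fun n => x n - k * ℓ) ℓ
  have hq : ∀ k, Measurable fun t => (q k t : ℝ≥0∞) := fun k => measurable_arcCount _ _ ℓ
  have hcs : ∀ t, (arcCount A x (K * ℓ) t : ℝ≥0∞) ^ 2 ≤ K * ∑ k ∈ range K, (q k t : ℝ≥0∞) ^ 2 := by
    intro t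
    have := sq_sum_le_card_mul_sum_sq (s := range K) (f := fun k => q k t)
    rw [card_range] at this
    rw [arcCount_nat_mul A x hℓ₀ (by linarith) t]
    exact_mod_cast this
  rw [← ENNReal.ofReal_le_ofReal_iff (by positivity [overlapSum_nonneg A x ℓ]),
    ← setLIntegral_arcCount_sq A x hK]
  calc ∫⁻ t in Set.Ioc 0 1, (arcCount A x (K * ℓ) t : ℝ≥0∞) ^ 2
      ≤ ∫⁻ t in Set.Ioc 0 1, K * ∑ k ∈ range K, (q k t : ℝ≥0∞) ^ 2 := lintegral_mono hcs
    _ = K * ∑ k ∈ range K, ∫⁻ t in Set.Ioc 0 1, (q k t : ℝ≥0∞) ^ 2 := by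
        rw [lintegral_const_mul _ (Finset.measurable_fun_sum _ fun k _ => (hq k).pow_const 2),
          lintegral_finsetSum _ fun k _ => (hq k).pow_const 2]
    _ = ENNReal.ofReal (K ^ 2 * overlapSum A x ℓ) := by
        simp only [q, setLIntegral_arcCount_sq _ _ hℓ, overlapSum_sub_const, sum_const, card_range,
          nsmul_eq_mul]
        rw [ENNReal.ofReal_mul (by positivity), ENNReal.ofReal_pow (by positivity),
          ENNReal.ofReal_natCast]
        ring

end Overlap

lemma card_filter_nd_le (x : ℕ → ℝ) (N : ℕ) {r : ℝ} (hr : 0 ≤ r) :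
    #{p ∈ Icc 1 N ×ˢ Icc 1 N | nd (x p.1 - x p.2) ≤ r} = pairCount x N r + N := by
  rw [pairCount, ← card_filter_add_card_filter_not (p := fun p : ℕ × ℕ => p.1 = p.2),
    filter_filter, filter_filter, add_comm]
  congr 1
  · congr 1
    exact filter_congr fun p _ => and_comm
  · have : {p ∈ Icc 1 N ×ˢ Icc 1 N | nd (x p.1 - x p.2) ≤ r ∧ p.1 = p.2} = diag (Icc 1 N) := by
      ext ⟨m, n⟩
      simp only [mem_filter, mem_product, mem_diag]
      constructor
      · rintro ⟨⟨hm, -⟩, -, rfl⟩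
        exact ⟨hm, rfl⟩
      · rintro ⟨hm, rfl⟩
        exact ⟨⟨hm, hm⟩, by simpa [nd] using hr, rfl⟩
    rw [this, diag_card, Nat.card_Icc, Nat.add_sub_cancel]

noncomputable def energy (x : ℕ → ℝ) (β : ℝ) (N : ℕ) (v : ℝ) : ℝ :=
  (N : ℝ) ^ (2 * β - 2) * overlapSum (Icc 1 N) x (v / (N : ℝ) ^ β)

section Energy

variable (x : ℕ → ℝ) (β : ℝ) {N : ℕ}

lemma energy_zero (N : ℕ) : energy x β N 0 = 0 := by
  simp [energy, overlapSum, nd, abs_nonneg]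

lemma energy_sub_le (hN : 0 < N) {v v' : ℝ} (hv' : 0 ≤ v') (hvv' : v ≤ v') :
    energy x β N v' - energy x β N v ≤ (v' - v) * (R2 x β v' N + (N : ℝ) ^ (β - 1)) := by
  have hNβ : 0 < (N : ℝ) ^ β := Real.rpow_pos_of_pos (by exact_mod_cast hN) β
  have h := overlapSum_sub_le (Icc 1 N) x (div_le_div_of_nonneg_right hvv' hNβ.le)
  rw [card_filter_nd_le x N (by positivity), ← sub_div] at h
  rw [R2, ← Real.rpow_two_mul_sub_two_mul_div_rpow_mul β (Nat.cast_pos.2 hN), energy, energy,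
    ← mul_sub]
  gcongr
  exact_mod_cast h

lemma le_energy_sub (hN : 0 < N) {v v' : ℝ} (hv : 0 ≤ v) (hvv' : v ≤ v') :
    (v' - v) * (R2 x β v N + (N : ℝ) ^ (β - 1)) ≤ energy x β N v' - energy x β N v := by
  have hNβ : 0 < (N : ℝ) ^ β := Real.rpow_pos_of_pos (by exact_mod_cast hN) β
  have h := le_overlapSum_sub (Icc 1 N) x (div_le_div_of_nonneg_right hvv' hNβ.le)
  rw [card_filter_nd_le x N (by positivity), ← sub_div] at h
  rw [R2, ← Real.rpow_two_mul_sub_two_mul_div_rpow_mul β (Nat.cast_pos.2 hN), energy, energy,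
    ← mul_sub]
  gcongr
  exact_mod_cast h

lemma sq_le_energy (hN : 0 < N) {v : ℝ} (hv : 0 ≤ v) (hv' : v / (N : ℝ) ^ β ≤ 1 / 2) :
    v ^ 2 ≤ energy x β N v := by
  have hN' : (0 : ℝ) < N := by exact_mod_cast hN
  have h := sq_le_overlapSum (Icc 1 N) x (by positivity) hv'
  rw [Nat.card_Icc, Nat.add_sub_cancel] at h
  calc v ^ 2 = (N : ℝ) ^ (2 * β - 2) * (N * (v / (N : ℝ) ^ β)) ^ 2 := by
        rw [Real.rpow_two_mul_sub_two β hN']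
        have := Real.rpow_pos_of_pos hN' β
        field_simp
    _ ≤ energy x β N v := by rw [energy]; gcongr

lemma energy_le_sq_mul_energy_div (hN : 0 < N) {v : ℝ} (hv : 0 ≤ v)
    (hv' : v / (N : ℝ) ^ β ≤ 1 / 2) {K : ℕ} (hK : 0 < K) :
    energy x β N v ≤ K ^ 2 * energy x β N (v / K) := by
  have hK' : (0 : ℝ) < K := by exact_mod_cast hK
  have hmul : (K : ℝ) * (v / K / (N : ℝ) ^ β) = v / (N : ℝ) ^ β := by field_simp
  have h := overlapSum_nat_mul_le (Icc 1 N) x (by positivity) hK (hmul ▸ hv')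
  rw [hmul] at h
  rw [energy, energy, mul_left_comm]
  gcongr

end Energy

lemma sum_range_div_mul_two_mul_succ_mul_div (σ : ℝ) {J : ℕ} (hJ : (J : ℝ) ≠ 0) :
    ∑ j ∈ range J, σ / J * (2 * ((j + 1) * (σ / J))) = σ ^ 2 + σ ^ 2 / J := by
  have hgauss : ∀ n : ℕ, ∑ j ∈ range n, ((j : ℝ) + 1) = n * (n + 1) / 2 := fun n => by
    induction n with
    | zero => simp
    | succ n ih => rw [sum_range_succ, ih]; push_cast; ring
  simp_rw [show ∀ j : ℕ, σ / J * (2 * ((j + 1) * (σ / J))) = 2 * (σ / J) ^ 2 * ((j : ℝ) + 1)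
    from fun j => by ring, ← mul_sum, hgauss]
  field_simp

section DifferenceQuotients

variable {F g : ℕ → ℝ → ℝ}

lemma eventually_le_sq_add_of_sub_le {σ ε : ℝ} (hσ : 0 < σ) (hε : 0 < ε) (hF₀ : ∀ N, F N 0 = 0)
    (hinc : ∀ᶠ N in atTop, ∀ v v', 0 ≤ v → v ≤ v' → F N v' - F N v ≤ (v' - v) * g N v')
    (hg : ∀ v, 0 < v → v ≤ σ → Tendsto (fun N => g N v) atTop (𝓝 (2 * v))) :
    ∀ᶠ N in atTop, F N σ ≤ σ ^ 2 + ε := by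
  obtain ⟨J, hJ⟩ := exists_nat_gt (σ ^ 2 / ε)
  have hJ₀ : (0 : ℝ) < J := lt_of_le_of_lt (by positivity) hJ
  set h := σ / J
  have hjh : ∀ j ∈ range J, ((j : ℝ) + 1) * h ≤ σ := fun j hj => by
    have : (j : ℝ) + 1 ≤ J := by exact_mod_cast mem_range.1 hj
    calc ((j : ℝ) + 1) * h ≤ J * h := by gcongr
      _ = σ := by simp only [h]; field_simp
  have hriemann : Tendsto (fun N => ∑ j ∈ range J, h * g N ((j + 1) * h)) atTop
      (𝓝 (∑ j ∈ range J, h * (2 * ((j + 1) * h)))) :=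
    tendsto_finsetSum _ fun j hj => (hg _ (by positivity) (hjh j hj)).const_mul h
  have hsum : ∑ j ∈ range J, h * (2 * ((j + 1) * h)) = σ ^ 2 + σ ^ 2 / J :=
    sum_range_div_mul_two_mul_succ_mul_div σ hJ₀.ne'
  have hlim : σ ^ 2 + σ ^ 2 / J < σ ^ 2 + ε := by
    rw [div_lt_iff₀ hε] at hJ
    rw [add_lt_add_iff_left, div_lt_iff₀ hJ₀]
    linarith
  filter_upwards [hinc, hriemann.eventually_lt_const (hsum ▸ hlim)] with N hN hlt
  calc F N σ = ∑ j ∈ range J, (F N ((j + 1 : ℕ) * h) - F N (j * h)) := by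
        rw [sum_range_sub (fun j : ℕ => F N (j * h)), Nat.cast_zero, zero_mul, hF₀, sub_zero]
        simp only [h]
        field_simp
    _ ≤ ∑ j ∈ range J, h * g N ((j + 1) * h) := sum_le_sum fun j _ => by
        have := hN (j * h) ((j + 1) * h) (by positivity) (by gcongr; linarith)
        push_cast
        rwa [show ((j : ℝ) + 1) * h - j * h = h by ring] at this
    _ ≤ σ ^ 2 + ε := hlt.le

lemma tendsto_two_mul_of_sq_le {s s₁ : ℝ} (hs : 0 < s) (hs₁ : s < s₁)
    (hinc_ge : ∀ᶠ N in atTop, ∀ v v', 0 ≤ v → v ≤ v' → (v' - v) * g N v ≤ F N v' - F N v)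
    (hinc_le : ∀ᶠ N in atTop, ∀ v v', 0 ≤ v → v ≤ v' → F N v' - F N v ≤ (v' - v) * g N v')
    (hlow : ∀ᶠ N in atTop, s ^ 2 ≤ F N s)
    (hup : ∀ v, 0 < v → v < s₁ → ∀ ε, 0 < ε → ∀ᶠ N in atTop, F N v ≤ v ^ 2 + ε) :
    Tendsto (fun N => g N s) atTop (𝓝 (2 * s)) := by
  rw [tendsto_order]
  constructor
  · intro a ha
    set δ := min (s / 2) ((2 * s - a) / 3)
    have hδ : 0 < δ := lt_min (by positivity) (by linarith)
    have hδs : δ ≤ s / 2 := min_le_left _ _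
    have hδa : δ ≤ (2 * s - a) / 3 := min_le_right _ _
    filter_upwards [hinc_le, hlow, hup (s - δ) (by linarith) (by linarith)
      (δ * ((2 * s - a) / 3)) (by positivity)] with N hN hl hu
    -- `s² - (s - δ)² - δ (2s - a)/3 ≤ F N s - F N (s - δ) ≤ δ g N s`
    have := hN (s - δ) s (by linarith) (by linarith)
    rw [sub_sub_cancel] at this
    have : δ * a < δ * g N s := by nlinarith
    exact lt_of_mul_lt_mul_left this hδ.le
  · intro b hb
    set δ := min ((s₁ - s) / 2) ((b - 2 * s) / 3)
    have hδ : 0 < δ := lt_min (by linarith) (by linarith)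
    have hδs : δ ≤ (s₁ - s) / 2 := min_le_left _ _
    have hδb : δ ≤ (b - 2 * s) / 3 := min_le_right _ _
    filter_upwards [hinc_ge, hlow, hup (s + δ) (by linarith) (by linarith)
      (δ * ((b - 2 * s) / 3)) (by positivity)] with N hN hl hu
    -- `δ g N s ≤ F N (s + δ) - F N s ≤ (s + δ)² + δ (b - 2s)/3 - s²`
    have := hN s (s + δ) hs.le (by linarith)
    rw [add_sub_cancel_left] at this
    have : δ * g N s < δ * b := by nlinarith
    exact lt_of_mul_lt_mul_left this hδ.le

end DifferenceQuotients

section PairCorrelation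

variable (x : ℕ → ℝ) {β : ℝ}

lemma eventually_energy_sub_le : ∀ᶠ N in atTop, ∀ v v', 0 ≤ v → v ≤ v' →
    energy x β N v' - energy x β N v ≤ (v' - v) * (R2 x β v' N + (N : ℝ) ^ (β - 1)) := by
  filter_upwards [eventually_gt_atTop 0] with N hN v v' hv hvv'
  exact energy_sub_le x β hN (hv.trans hvv') hvv'

lemma eventually_le_energy_sub : ∀ᶠ N in atTop, ∀ v v', 0 ≤ v → v ≤ v' →
    (v' - v) * (R2 x β v N + (N : ℝ) ^ (β - 1)) ≤ energy x β N v' - energy x β N v := by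
  filter_upwards [eventually_gt_atTop 0] with N hN v v' hv hvv'
  exact le_energy_sub x β hN hv hvv'

lemma eventually_energy_le_sq_add (hβ0 : 0 ≤ β) (hβ1 : β < 1) {s₀ : ℝ} (hs₀ : 0 < s₀)
    (h : ∀ s : ℝ, 0 < s → s < s₀ → Tendsto (fun N => R2 x β s N) atTop (𝓝 (2 * s)))
    {σ : ℝ} (hσ : 0 < σ) (hσ' : β = 0 → σ ≤ 1 / 2) {ε : ℝ} (hε : 0 < ε) :
    ∀ᶠ N in atTop, energy x β N σ ≤ σ ^ 2 + ε := by
  obtain ⟨K, hK⟩ := exists_nat_gt (σ / s₀)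
  have hK₀ : (0 : ℝ) < K := lt_of_le_of_lt (by positivity) hK
  have hσK : σ / K < s₀ := by rwa [div_lt_comm₀ hK₀ hs₀]
  have hsmall := eventually_le_sq_add_of_sub_le (F := energy x β) (σ := σ / K) (ε := ε / K ^ 2)
    (by positivity) (by positivity) (energy_zero x β) (eventually_energy_sub_le x)
    fun v hv hvσ => by
      simpa using (h v hv (hvσ.trans_lt hσK)).add (tendsto_rpow_sub_one_atTop_nhds_zero hβ1)
  filter_upwards [hsmall, eventually_div_rpow_le_half hβ0 hσ', eventually_gt_atTop 0]
    with N hN hσN hN₀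
  calc energy x β N σ ≤ K ^ 2 * energy x β N (σ / K) :=
        energy_le_sq_mul_energy_div x β hN₀ hσ.le hσN (by exact_mod_cast hK₀)
    _ ≤ K ^ 2 * ((σ / K) ^ 2 + ε / K ^ 2) := by gcongr
    _ = σ ^ 2 + ε := by field_simp

lemma tendsto_R2_of_lt (hβ0 : 0 ≤ β) (hβ1 : β < 1) {s₀ : ℝ} (hs₀ : 0 < s₀)
    (h : ∀ s : ℝ, 0 < s → s < s₀ → Tendsto (fun N => R2 x β s N) atTop (𝓝 (2 * s)))
    {s : ℝ} (hs : 0 < s) (hs' : β = 0 → s < 1 / 2) :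
    Tendsto (fun N => R2 x β s N) atTop (𝓝 (2 * s)) := by
  obtain ⟨s₁, hss₁, hs₁⟩ : ∃ s₁, s < s₁ ∧ (β = 0 → s₁ ≤ 1 / 2) := by
    by_cases hβ : β = 0
    · exact ⟨1 / 2, hs' hβ, fun _ => le_rfl⟩
    · exact ⟨s + 1, by linarith, fun h => absurd h hβ⟩
  have hlow : ∀ᶠ N in atTop, s ^ 2 ≤ energy x β N s := by
    filter_upwards [eventually_div_rpow_le_half hβ0 fun hβ => (hs' hβ).le,
      eventually_gt_atTop 0] with N hsN hN
    exact sq_le_energy x β hN hs.le hsN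
  have := tendsto_two_mul_of_sq_le hs hss₁ (eventually_le_energy_sub x)
    (eventually_energy_sub_le x) hlow fun v hv hvs₁ _ =>
      eventually_energy_le_sq_add x hβ0 hβ1 hs₀ h hv fun hβ => hvs₁.le.trans (hs₁ hβ)
  simpa using this.sub (tendsto_rpow_sub_one_atTop_nhds_zero hβ1)

end PairCorrelation

lemma tendsto_R2_zero_half (x : ℕ → ℝ) : Tendsto (fun N => R2 x 0 (1 / 2) N) atTop (𝓝 1) := by
  have hR2 : ∀ N : ℕ, 0 < N → R2 x 0 (1 / 2) N = 1 - (N : ℝ)⁻¹ := fun N hN => by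
    have hcount := card_filter_nd_le x N (by norm_num : (0 : ℝ) ≤ 1 / 2)
    rw [filter_true_of_mem fun p _ => (abs_sub_round _ : nd (x p.1 - x p.2) ≤ 1 / 2),
      card_product, Nat.card_Icc, Nat.add_sub_cancel] at hcount
    have hN' : (0 : ℝ) < N := by exact_mod_cast hN
    rw [R2, Real.rpow_zero, div_one, sub_zero, Real.rpow_two,
      show (pairCount x N (1 / 2) : ℝ) = N * N - N by
        rw [eq_sub_iff_add_eq]; exact_mod_cast hcount.symm]
    field_simp
  have : Tendsto (fun N : ℕ => 1 - (N : ℝ)⁻¹) atTop (𝓝 1) := by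
    simpa using tendsto_const_nhds.sub tendsto_inv_atTop_nhds_zero_nat (a := (1 : ℝ))
  exact this.congr' (eventually_gt_atTop 0 |>.mono fun N hN => (hR2 N hN).symm)

theorem stmt6_general (x : ℕ → ℝ)
    (β : ℝ) (hβ0 : 0 ≤ β) (hβ1 : β < 1) (s₀ : ℝ) (hs₀ : 0 < s₀)
    (h : ∀ s : ℝ, 0 < s → s < s₀ →
      Tendsto (fun N => R2 x β s N) atTop (nhds (2 * s))) :
    PPC x β := by
  intro s hs hs'
  rcases eq_or_ne β 0 with rfl | hβ
  · rcases (hs' rfl).lt_or_eq with hlt | rfl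
    · exact tendsto_R2_of_lt x hβ0 hβ1 hs₀ h hs fun _ => hlt
    · simpa using tendsto_R2_zero_half x
  · exact tendsto_R2_of_lt x hβ0 hβ1 hs₀ h hs fun h => absurd h hβ

theorem stmt6 (x : ℕ → ℝ) (hx : ∀ n, x n ∈ Set.Icc (0:ℝ) 1)
    (β : ℝ) (hβ0 : 0 ≤ β) (hβ1 : β < 1) (s₀ : ℝ) (hs₀ : 0 < s₀)
    (h : ∀ s : ℝ, 0 < s → s < s₀ →
      Tendsto (fun N => R2 x β s N) atTop (nhds (2 * s))) :
    PPC x β :=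
  stmt6_general x β hβ0 hβ1 s₀ hs₀ h
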